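/- arXiv:1204.5951 — 3 statements merged into one kernel-verified Lean document; each statement's English description precedes it below -/
import Mathlib

section
/- Let g be a finite-dimensional complex vector space with conjugation coming from a real form, and let D ⊆ g ⊕ g* be a maximal isotropic subspace of the form L(E,ε) for a subspace E ⊆ g and skew form ε ∈ Λ²E*. Then D ∩ D̄ = 0 if and only if E + Ē = g and for every X ∈ E ∩ Ē, the condition ε(X,Y) = conj(ε(X̄,Ȳ)) for all Y ∈ E ∩ Ē implies X = 0. -/
/-!
A point of `D ∩ D̄` is a pair `(X, ξ)` with `X ∈ E ∩ Ē` such that `ξ` agrees with `ε(X, ·)` on `E`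
and with `conj ε(X̄, ·̄)` on `Ē`. Two forms on `E` and `Ē` that agree on `E ∩ Ē` glue to a form on
`g`, and the glued form is unique exactly when no nonzero form vanishes on `E + Ē`, i.e. when
`E + Ē = g`. Hence `D ∩ D̄ = 0` iff `E + Ē = g` and the two forms attached to a nonzero
`X ∈ E ∩ Ē` never agree on `E ∩ Ē`.
-/

open Module

/-- The natural complex-bilinear pairing `⟨A+ξ, B+η⟩ = η(A) + ξ(B)` on `V ⊕ V*`. -/
def pairC {V : Type*} [AddCommGroup V] [Module ℂ V]
    (e f : V × Module.Dual ℂ V) : ℂ :=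
  f.2 e.1 + e.2 f.1

section Glue

variable {K V W : Type*} [Field K] [AddCommGroup V] [Module K V] [AddCommGroup W] [Module K W]

theorem LinearMap.exists_eqOn_of_eqOn_inf {p q : Submodule K V} {f g : V →ₗ[K] W}
    (h : Set.EqOn f g (p ⊓ q)) :
    ∃ φ : V →ₗ[K] W, Set.EqOn φ f p ∧ Set.EqOn φ g q := by
  let F : V →ₗ.[K] W := ⟨p, f ∘ₗ p.subtype⟩
  let G : V →ₗ.[K] W := ⟨q, g ∘ₗ q.subtype⟩
  have hFG : ∀ (x : F.domain) (y : G.domain), (x : V) = y → F x = G y := by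
    rintro ⟨x, hx⟩ ⟨y, hy⟩ (rfl : x = y)
    exact h ⟨hx, hy⟩
  obtain ⟨φ, hφ⟩ := (F.sup G hFG).toFun.exists_extend
  refine ⟨φ, fun x hx => ?_, fun x hx => ?_⟩
  · exact (congr($hφ ⟨x, le_sup_left (b := q) hx⟩)).trans
      ((F.left_le_sup G hFG).2 (x := ⟨x, hx⟩) rfl).symm
  · exact (congr($hφ ⟨x, le_sup_right (a := p) hx⟩)).trans
      ((F.right_le_sup G hFG).2 (x := ⟨x, hx⟩) rfl).symm

theorem Module.Dual.eq_zero_of_eqOn_zero_of_sup_eq_top {p q : Submodule K V} (hpq : p ⊔ q = ⊤)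
    {ξ : Dual K V} (hp : Set.EqOn ξ 0 p) (hq : Set.EqOn ξ 0 q) : ξ = 0 := by
  rw [← LinearMap.ker_eq_top, eq_top_iff, ← hpq]
  exact sup_le (fun x hx => hp hx) (fun x hx => hq hx)

theorem Submodule.forall_glued_eq_zero_iff {p q : Submodule K V} {φ ψ : V → Dual K V}
    (hφ : φ 0 = 0) (hψ : ψ 0 = 0) :
    (∀ (X : V) (ξ : Dual K V),
        X ∈ p ⊓ q → Set.EqOn ξ (φ X) p → Set.EqOn ξ (ψ X) q → X = 0 ∧ ξ = 0) ↔
      p ⊔ q = ⊤ ∧ ∀ X ∈ p ⊓ q, (∀ Y ∈ p ⊓ q, φ X Y = ψ X Y) → X = 0 := by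
  constructor
  · intro h
    have htop : p ⊔ q = ⊤ := by
      by_contra hne
      obtain ⟨ξ, hξ, hpq⟩ := (p ⊔ q).exists_le_ker_of_lt_top (lt_top_iff_ne_top.2 hne)
      refine hξ (h 0 ξ (zero_mem _) (fun y hy => ?_) (fun y hy => ?_)).2
      · rw [hφ]; exact hpq (le_sup_left (b := q) hy)
      · rw [hψ]; exact hpq (le_sup_right (a := p) hy)
    refine ⟨htop, fun X hX hXY => ?_⟩
    obtain ⟨ξ, hξp, hξq⟩ := LinearMap.exists_eqOn_of_eqOn_inf fun Y hY => hXY Y hY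
    exact (h X ξ hX hξp hξq).1
  · rintro ⟨htop, h⟩ X ξ hX hp hq
    obtain rfl : X = 0 := h X hX fun Y hY => (hp hY.1).symm.trans (hq hY.2)
    rw [hφ] at hp
    rw [hψ] at hq
    exact ⟨rfl, Module.Dual.eq_zero_of_eqOn_zero_of_sup_eq_top htop hp hq⟩

end Glue

section Conjugation

variable {V : Type*} [AddCommGroup V] [Module ℂ V]

def conjDual (σ : V →ₗ⋆[ℂ] V) (ξ : Dual ℂ V) : Dual ℂ V where
  toFun v := starRingEnd ℂ (ξ (σ v))
  map_add' := by simp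
  map_smul' := by simp

@[simp]
theorem conjDual_apply (σ : V →ₗ⋆[ℂ] V) (ξ : Dual ℂ V) (v : V) :
    conjDual σ ξ v = starRingEnd ℂ (ξ (σ v)) := rfl

theorem conjDual_involutive {σ : V →ₗ⋆[ℂ] V} (hσ : Function.Involutive σ) :
    Function.Involutive (conjDual σ) := fun ξ => by
  ext v
  simp [hσ v]

/-- The paper's `L(E, ε)`. -/
def lagrangianSet (E : Submodule ℂ V) (ε : V →ₗ[ℂ] V →ₗ[ℂ] ℂ) : Set (V × Dual ℂ V) :=
  {e | e.1 ∈ E ∧ ∀ y ∈ E, e.2 y = ε e.1 y}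

theorem mem_image_lagrangianSet_iff {σ : V →ₗ⋆[ℂ] V} (hσ : Function.Involutive σ)
    {E : Submodule ℂ V} {ε : V →ₗ[ℂ] V →ₗ[ℂ] ℂ} {X : V} {ξ : Dual ℂ V} :
    (X, ξ) ∈ Prod.map σ (conjDual σ) '' lagrangianSet E ε ↔
      X ∈ σ '' E ∧ Set.EqOn ξ (conjDual σ (ε (σ X))) (σ '' E) := by
  have hτ := hσ.prodMap (conjDual_involutive hσ)
  rw [Set.mem_image_iff_of_inverse hτ.leftInverse hτ.rightInverse,
    hσ.image_eq_preimage_symm]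
  simp only [lagrangianSet, Set.mem_ofPred_eq, Prod.map_fst, Prod.map_snd, Set.mem_preimage,
    SetLike.mem_coe]
  refine and_congr_right fun _ => ⟨fun h y hy => ?_, fun h y hy => ?_⟩
  · rw [conjDual_apply, ← h _ hy, conjDual_apply, hσ, Complex.conj_conj]
  · rw [conjDual_apply, h (x := σ y) (by rwa [Set.mem_preimage, hσ]), conjDual_apply, hσ,
      Complex.conj_conj]

end Conjugation

theorem stmt9_general (g : Type*) [AddCommGroup g] [Module ℂ g]
    (σ : g → g)
    (hσadd : ∀ x y, σ (x + y) = σ x + σ y)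
    (hσsmul : ∀ (c : ℂ) (x : g), σ (c • x) = (starRingEnd ℂ c) • σ x)
    (hσinv : ∀ x, σ (σ x) = x)
    (σP : g × Module.Dual ℂ g → g × Module.Dual ℂ g)
    (hσP : ∀ (x : g) (ξ : Module.Dual ℂ g),
      (σP (x, ξ)).1 = σ x ∧ ∀ v : g, (σP (x, ξ)).2 v = starRingEnd ℂ (ξ (σ v)))
    (E : Submodule ℂ g)
    (Ebar : Submodule ℂ g) (hEbar : (Ebar : Set g) = σ '' (E : Set g))
    (ε : g →ₗ[ℂ] g →ₗ[ℂ] ℂ)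
    (D : Submodule ℂ (g × Module.Dual ℂ g))
    (hD : (D : Set (g × Module.Dual ℂ g)) = {e | e.1 ∈ E ∧ ∀ y ∈ E, e.2 y = ε e.1 y})
    (Dbar : Submodule ℂ (g × Module.Dual ℂ g))
    (hDbar : (Dbar : Set (g × Module.Dual ℂ g)) = σP '' (D : Set (g × Module.Dual ℂ g))) :
    D ⊓ Dbar = ⊥ ↔
      (E ⊔ Ebar = ⊤ ∧
       ∀ X ∈ E ⊓ Ebar,
         (∀ Y ∈ E ⊓ Ebar, ε X Y = starRingEnd ℂ (ε (σ X) (σ Y))) → X = 0) := by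
  let σL : g →ₗ⋆[ℂ] g := { toFun := σ, map_add' := hσadd, map_smul' := hσsmul }
  have hσP' : σP = Prod.map σL (conjDual σL) :=
    funext fun e => Prod.ext (hσP e.1 e.2).1 (LinearMap.ext (hσP e.1 e.2).2)
  have hmem : ∀ X ξ, (X, ξ) ∈ D ⊓ Dbar ↔
      X ∈ E ⊓ Ebar ∧ Set.EqOn ξ (ε X) E ∧ Set.EqOn ξ (conjDual σL (ε (σL X))) Ebar := by
    intro X ξ
    have hEbar' : (Ebar : Set g) = σL '' E := hEbar
    rw [Submodule.mem_inf, ← SetLike.mem_coe, ← SetLike.mem_coe (p := Dbar), hDbar, hσP', hD,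
      ← lagrangianSet, mem_image_lagrangianSet_iff (σ := σL) hσinv, Submodule.mem_inf,
      ← SetLike.mem_coe (p := Ebar), hEbar']
    exact ⟨fun ⟨⟨hXE, hξE⟩, hXEbar, hξEbar⟩ => ⟨⟨hXE, hXEbar⟩, hξE, hξEbar⟩,
      fun ⟨⟨hXE, hXEbar⟩, hξE, hξEbar⟩ => ⟨⟨hXE, hξE⟩, hXEbar, hξEbar⟩⟩
  refine (Submodule.eq_bot_iff _).trans (Iff.trans ?_ (Submodule.forall_glued_eq_zero_iff
    (ψ := fun X => conjDual σL (ε (σL X))) (map_zero ε) (by ext; simp)))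
  simp only [Prod.forall, hmem, Prod.mk_eq_zero, and_imp]

/-- let `g` be a finite-dimensional complex vector space with a
conjugation `σ` coming from a real form, extended componentwise to `g ⊕ g*`.
Let `D = L(E,ε)` be maximal isotropic, for a subspace `E ⊆ g` and skew form
`ε`.  Then `D ∩ D̄ = 0` iff `E + Ē = g` and for every `X ∈ E ∩ Ē`,
`(∀ Y ∈ E ∩ Ē, ε(X,Y) = conj (ε(X̄,Ȳ)))` implies `X = 0`. -/
theorem stmt9 (g : Type*) [AddCommGroup g] [Module ℂ g] [FiniteDimensional ℂ g]
    (σ : g → g)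
    (hσadd : ∀ x y, σ (x + y) = σ x + σ y)
    (hσsmul : ∀ (c : ℂ) (x : g), σ (c • x) = (starRingEnd ℂ c) • σ x)
    (hσinv : ∀ x, σ (σ x) = x)
    (σP : g × Module.Dual ℂ g → g × Module.Dual ℂ g)
    (hσP : ∀ (x : g) (ξ : Module.Dual ℂ g),
      (σP (x, ξ)).1 = σ x ∧ ∀ v : g, (σP (x, ξ)).2 v = starRingEnd ℂ (ξ (σ v)))
    (E : Submodule ℂ g)
    (Ebar : Submodule ℂ g) (hEbar : (Ebar : Set g) = σ '' (E : Set g))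
    (ε : g →ₗ[ℂ] g →ₗ[ℂ] ℂ) (hskew : ∀ x y : g, ε x y = - ε y x)
    (D : Submodule ℂ (g × Module.Dual ℂ g))
    (hD : (D : Set (g × Module.Dual ℂ g)) = {e | e.1 ∈ E ∧ ∀ y ∈ E, e.2 y = ε e.1 y})
    (hiso : ∀ a ∈ D, ∀ b ∈ D, pairC a b = 0)
    (hdim : Module.finrank ℂ D = Module.finrank ℂ g)
    (Dbar : Submodule ℂ (g × Module.Dual ℂ g))
    (hDbar : (Dbar : Set (g × Module.Dual ℂ g)) = σP '' (D : Set (g × Module.Dual ℂ g))) :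
    D ⊓ Dbar = ⊥ ↔
      (E ⊔ Ebar = ⊤ ∧
       ∀ X ∈ E ⊓ Ebar,
         (∀ Y ∈ E ⊓ Ebar, ε X Y = starRingEnd ℂ (ε (σ X) (σ Y))) → X = 0) :=
  stmt9_general g σ hσadd hσsmul hσinv σP hσP E Ebar hEbar ε D hD Dbar hDbar
end

section
/- Let g be a finite-dimensional real Lie algebra, p ⊆ g a subalgebra, and D ⊆ g ⊕ g* a Dirac subalgebra of g ⋉ g* containing p. Then the image of D under the quotient-projection map q: g ⊕ g* → (g/p) ⊕ (g/p)* (defined on X + ξ with ξ|_p = 0, sending X to its class in g/p and ξ to the induced functional on g/p) is a maximal isotropic subspace of (g/p) ⊕ (g/p)*. -/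
open Module

/-- The coadjoint action: `(coad A η) C = -η ⁅A, C⁆`. -/
noncomputable def coad {g : Type*} [LieRing g] [LieAlgebra ℝ g]
    (A : g) (η : Module.Dual ℝ g) : Module.Dual ℝ g :=
  - (η ∘ₗ (LieAlgebra.ad ℝ g A))

/-- The semidirect product bracket `[A+ξ, B+η] = [A,B] + ad*_A η − ad*_B ξ`. -/
noncomputable def sbr {g : Type*} [LieRing g] [LieAlgebra ℝ g]
    (e f : g × Module.Dual ℝ g) : g × Module.Dual ℝ g :=
  (⁅e.1, f.1⁆, coad e.1 f.2 - coad f.1 e.2)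

/-- The natural symmetric pairing `⟨v+α, w+β⟩ = β(v) + α(w)` on `V ⊕ V*`. -/
def pair {V : Type*} [AddCommGroup V] [Module ℝ V]
    (e f : V × Module.Dual ℝ V) : ℝ :=
  f.2 e.1 + e.2 f.1

/-- The quotient-projection map on `D`, assuming all dual parts of elements of
`D` vanish on `p`. -/
noncomputable def qmap {V : Type*} [AddCommGroup V] [Module ℝ V]
    (p : Submodule ℝ V) (D : Submodule ℝ (V × Module.Dual ℝ V))
    (hv : ∀ x : D, p ≤ LinearMap.ker (x : V × Module.Dual ℝ V).2) :
    D →ₗ[ℝ] (V ⧸ p) × Module.Dual ℝ (V ⧸ p) where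
  toFun x := (Submodule.Quotient.mk x.1.1, p.liftQ x.1.2 (hv x))
  map_add' x y := by
    refine Prod.ext (by simp [Submodule.Quotient.mk_add]) ?_
    apply LinearMap.ext; intro q
    obtain ⟨v, rfl⟩ := Submodule.Quotient.mk_surjective p q
    simp [Submodule.liftQ_apply]
  map_smul' c x := by
    refine Prod.ext (by simp [Submodule.Quotient.mk_smul]) ?_
    apply LinearMap.ext; intro q
    obtain ⟨v, rfl⟩ := Submodule.Quotient.mk_surjective p q
    simp [Submodule.liftQ_apply]

/-- let `D` be a Dirac subalgebra of `g ⋉ g*` containing a Lie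
subalgebra `p ⊆ g`.  Its image under the quotient-projection
`q : g ⊕ g* → (g/p) ⊕ (g/p)*` (defined on elements with `ξ|_p = 0`: `X` goes
to its class and `ξ` to the induced functional on `g/p`) is a maximal
isotropic subspace of `(g/p) ⊕ (g/p)*`. -/
theorem stmt14 (g : Type*) [LieRing g] [LieAlgebra ℝ g] [FiniteDimensional ℝ g]
    (p : LieSubalgebra ℝ g)
    (D : Submodule ℝ (g × Module.Dual ℝ g))
    (hiso : ∀ a ∈ D, ∀ b ∈ D, pair a b = 0)
    (hdim : Module.finrank ℝ D = Module.finrank ℝ g)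
    (hsub : ∀ a ∈ D, ∀ b ∈ D, sbr a b ∈ D)
    (hp : ∀ P ∈ p, ((P, (0 : Module.Dual ℝ g)) : g × Module.Dual ℝ g) ∈ D) :
    let Q : Set ((g ⧸ p.toSubmodule) × Module.Dual ℝ (g ⧸ p.toSubmodule)) :=
      {y | ∃ x ∈ D, Submodule.Quotient.mk x.1 = y.1 ∧
        ∀ v : g, y.2 (Submodule.Quotient.mk v) = x.2 v}
    (∀ a ∈ Q, ∀ b ∈ Q, pair a b = 0) ∧
    ∃ S : Submodule ℝ ((g ⧸ p.toSubmodule) × Module.Dual ℝ (g ⧸ p.toSubmodule)),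
      (S : Set ((g ⧸ p.toSubmodule) × Module.Dual ℝ (g ⧸ p.toSubmodule))) = Q ∧
      Module.finrank ℝ S = Module.finrank ℝ (g ⧸ p.toSubmodule) := by
  intro Q
  -- every element of D has dual part vanishing on p
  have hv : ∀ x : D, p.toSubmodule ≤ LinearMap.ker (x : g × Module.Dual ℝ g).2 := by
    intro x P hP
    have h := hiso x.1 x.2 (P, 0) (hp P hP)
    simpa [pair] using h
  constructor
  · -- isotropy
    rintro a ⟨x, hx, hx1, hx2⟩ b ⟨x', hx', hx1', hx2'⟩
    have h := hiso x hx x' hx'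
    simp only [pair] at h ⊢
    rw [← hx1, ← hx1', hx2', hx2]
    linarith
  · set f := qmap p.toSubmodule D hv with hf
    refine ⟨LinearMap.range f, ?_, ?_⟩
    · ext y
      simp only [LinearMap.mem_range, SetLike.mem_coe]
      constructor
      · rintro ⟨x, rfl⟩
        refine ⟨x.1, x.2, rfl, fun v => ?_⟩
        simp [hf, qmap, Submodule.liftQ_apply]
      · rintro ⟨x, hx, h1, h2⟩
        refine ⟨⟨x, hx⟩, ?_⟩
        refine Prod.ext h1 ?_
        apply LinearMap.ext; intro q
        obtain ⟨v, rfl⟩ := Submodule.Quotient.mk_surjective p.toSubmodule q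
        simp [hf, qmap, Submodule.liftQ_apply, h2 v]
    · -- dimension count
      haveI : FiniteDimensional ℝ D := inferInstance
      have h1 := LinearMap.finrank_range_add_finrank_ker (K := ℝ) (V := D) f
      -- the kernel of f is isomorphic to p
      let Kf : Submodule ℝ D := LinearMap.ker f
      letI iK1 : AddCommGroup Kf := Submodule.addCommGroup (R := ℝ) (M := D) Kf
      letI iK2 : Module ℝ Kf := Submodule.module (R := ℝ) (M := D) Kf
      have hmem : ∀ x : Kf, (x.1.1 : g × Module.Dual ℝ g).1 ∈ p.toSubmodule := by
        intro x
        have h : f x.1 = 0 := LinearMap.mem_ker.mp x.2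
        exact (Submodule.Quotient.mk_eq_zero _).mp (congrArg Prod.fst h)
      let π : Kf →ₗ[ℝ] p.toSubmodule :=
        { toFun := fun x => ⟨x.1.1.1, hmem x⟩
          map_add' := fun x y => rfl
          map_smul' := fun c x => rfl }
      have hbij : Function.Bijective π := by
        constructor
        · intro x y hxy
          have h1' : x.1.1.1 = y.1.1.1 := congrArg Subtype.val hxy
          have key : ∀ z : Kf, z.1.1.2 = 0 := by
            intro z
            have h : f z.1 = 0 := LinearMap.mem_ker.mp z.2
            have h2 := congrArg Prod.snd h
            rw [hf] at h2
            apply LinearMap.ext; intro v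
            have h3 := congrArg (fun φ : Module.Dual ℝ (g ⧸ p.toSubmodule) =>
              φ (Submodule.Quotient.mk v)) h2
            simp only [qmap, LinearMap.coe_mk, AddHom.coe_mk, Submodule.liftQ_apply,
              Prod.snd_zero, LinearMap.zero_apply] at h3
            simpa using h3
          apply Subtype.ext; apply Subtype.ext
          exact Prod.ext h1' ((key x).trans (key y).symm)
        · rintro ⟨P, hP⟩
          have hD : ((P, (0 : Module.Dual ℝ g)) : g × Module.Dual ℝ g) ∈ D := hp P hP
          have hker : (⟨(P, 0), hD⟩ : D) ∈ LinearMap.ker f := by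
            rw [LinearMap.mem_ker, hf]
            have h1' : (Submodule.Quotient.mk P : g ⧸ p.toSubmodule) = 0 :=
              (Submodule.Quotient.mk_eq_zero _).mpr hP
            refine Prod.ext h1' ?_
            apply LinearMap.ext; intro q
            obtain ⟨v, rfl⟩ := Submodule.Quotient.mk_surjective p.toSubmodule q
            simp [qmap, Submodule.liftQ_apply]
          exact ⟨⟨⟨(P, 0), hD⟩, hker⟩, rfl⟩
      have h4 : Module.finrank ℝ (LinearMap.ker f) = Module.finrank ℝ p.toSubmodule :=
        (LinearEquiv.ofBijective π hbij).finrank_eq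
      have h2 := Submodule.finrank_quotient_add_finrank p.toSubmodule
      rw [h4, hdim] at h1
      omega
end

section
/- Let V be a finite-dimensional complex vector space arising as the complexification of a real vector space, with induced conjugation on V ⊕ V*, and let D ⊆ V ⊕ V* be maximal isotropic for the pairing ⟨v+ξ, w+η⟩ = η(v)+ξ(w). Then dim_ℂ(D ∩ D̄) ≡ dim_ℂ V (mod 2) — i.e., the real index of D has the same parity as dim V. -/
/-!
Write `π : V ⊕ V* → V` for the projection, `n = dim V`, and `E₁ = π D₁`, `E₂ = π D₂` for two
maximal isotropic subspaces. A maximal isotropic `D` meets `V*` exactly in `Ann (π D)`, so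
rank–nullity for `π` on `D₁ ∩ D₂` gives `dim (D₁ ∩ D₂) = dim π(D₁ ∩ D₂) + n - dim (E₁ + E₂)`.
On `F = E₁ ∩ E₂`, pairing a linear lift to `D₂` of `z` with a linear lift to `D₁` of `u` is an
alternating form whose kernel is `π(D₁ ∩ D₂)`; alternating forms have even rank, so
`dim π(D₁ ∩ D₂) ≡ dim F`. Hence `dim (D₁ ∩ D₂) ≡ n + dim E₁ + dim E₂ (mod 2)`. For `D₂ = D̄`
conjugation gives `dim E₂ = dim E₁`.
-/

open Module

open LinearMap ComplexConjugate

section AlternatingForms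

variable {K M : Type*} [Field K] [NeZero (2 : K)] [AddCommGroup M] [Module K M]
  [FiniteDimensional K M] {C : LinearMap.BilinForm K M}

theorem LinearMap.BilinForm.IsAlt.even_finrank_of_separatingLeft (hC : C.IsAlt)
    (hsep : C.SeparatingLeft) : Even (finrank K M) := by
  set b := Module.finBasis K M
  set A := LinearMap.toMatrix₂ b b C
  have hskew : A.transpose = -A := by
    ext i j
    simp [A, LinearMap.toMatrix₂_apply, ← hC.neg_eq (b i) (b j)]
  have hdet : A.det ≠ 0 := (LinearMap.separatingLeft_iff_det_ne_zero b).1 hsep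
  rcases Nat.even_or_odd (finrank K M) with h | h
  · exact h
  · have : A.det = -A.det := by
      calc A.det = A.transpose.det := (Matrix.det_transpose A).symm
        _ = -A.det := by
          rw [hskew, Matrix.det_neg, Fintype.card_fin, h.neg_one_pow, neg_one_mul]
    have h2 : (2 : K) * A.det = 0 := by linear_combination this
    exact absurd ((mul_eq_zero.1 h2).resolve_left two_ne_zero) hdet

theorem LinearMap.BilinForm.IsAlt.even_finrank_range (hC : C.IsAlt) :
    Even (finrank K (range C)) := by
  obtain ⟨W, hW⟩ := (ker C).exists_isCompl
  have hsep : (C.restrict W).SeparatingLeft := by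
    intro w hw
    have hker : (w : M) ∈ ker C := by
      ext m
      have hm : m ∈ ker C ⊔ W := hW.sup_eq_top ▸ Submodule.mem_top
      obtain ⟨r, hr, w', hw', rfl⟩ := Submodule.mem_sup.1 hm
      have hrw : C w r = 0 := by rw [← hC.neg_eq r w, mem_ker.1 hr]; simp
      have hww' : C w w' = 0 := hw ⟨w', hw'⟩
      simp [hrw, hww']
    exact Subtype.ext ((Submodule.disjoint_def.1 hW.disjoint) _ hker w.2)
  have hWeven := (show (C.restrict W).IsAlt from fun w => hC w).even_finrank_of_separatingLeft hsep
  have h₁ := C.finrank_range_add_finrank_ker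
  have h₂ := Submodule.finrank_add_eq_of_isCompl hW
  rwa [show finrank K (range C) = finrank K W by omega]

end AlternatingForms

section Submodules

variable {K M N : Type*} [Field K] [AddCommGroup M] [Module K M] [AddCommGroup N] [Module K N]

theorem Submodule.finrank_map_add_finrank_inf_ker [FiniteDimensional K M] (f : M →ₗ[K] N)
    (p : Submodule K M) :
    finrank K (p.map f) + finrank K (p ⊓ ker f : Submodule K M) = finrank K p := by
  rw [← range_domRestrict, ← Submodule.map_comap_subtype, Submodule.finrank_map_subtype_eq,
    ← ker_domRestrict]
  exact (f.domRestrict p).finrank_range_add_finrank_ker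

theorem Submodule.finrank_map_of_injective {τ τ' : K →+* K} [RingHomInvPair τ τ']
    [RingHomInvPair τ' τ]
    {f : M →ₛₗ[τ] N} (hf : Function.Injective f) (p : Submodule K M) :
    finrank K (p.map f) = finrank K p := by
  set e := Submodule.equivMapOfInjective f hf p
  have := lift_rank_eq_of_equiv_equiv τ e.toAddEquiv
    ⟨τ.injective, RingHomSurjective.is_surjective⟩ e.map_smulₛₗ
  unfold finrank
  rw [← Cardinal.toNat_lift, ← this, Cardinal.toNat_lift]

theorem Submodule.exists_lift_of_le_map (f : M →ₗ[K] N) {p : Submodule K M}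
    {q : Submodule K N} (hq : q ≤ p.map f) :
    ∃ s : q →ₗ[K] M, ∀ x, s x ∈ p ∧ f (s x) = x := by
  obtain ⟨g, hg⟩ := (f.submoduleMap p).exists_rightInverse_of_surjective
    (range_eq_top.2 (f.submoduleMap_surjective p))
  refine ⟨p.subtype ∘ₗ g ∘ₗ Submodule.inclusion hq, fun x => ⟨(g _).2, ?_⟩⟩
  exact congr_arg Subtype.val (LinearMap.congr_fun hg (Submodule.inclusion hq x))

end Submodules

section DualPairing

variable (K V : Type*) [Field K] [AddCommGroup V] [Module K V]

/-- `pairC`, bundled as a bilinear form and over an arbitrary field. -/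
def prodDualPairing : LinearMap.BilinForm K (V × Dual K V) :=
  ((snd K V (Dual K V)).compl₂ (fst K V (Dual K V))).flip +
    (snd K V (Dual K V)).compl₂ (fst K V (Dual K V))

@[simp]
theorem prodDualPairing_apply (e f : V × Dual K V) :
    prodDualPairing K V e f = f.2 e.1 + e.2 f.1 :=
  rfl

variable {K V}

def IsIsotropic (D : Submodule K (V × Dual K V)) : Prop :=
  ∀ a ∈ D, ∀ b ∈ D, prodDualPairing K V a b = 0

structure IsMaximalIsotropic (D : Submodule K (V × Dual K V)) : Prop where
  isIsotropic : IsIsotropic D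
  finrank_eq : finrank K D = finrank K V

variable {D D₁ D₂ : Submodule K (V × Dual K V)}

namespace IsIsotropic

theorem snd_apply_fst [NeZero (2 : K)] (hD : IsIsotropic D) {a : V × Dual K V} (ha : a ∈ D) :
    a.2 a.1 = 0 := by
  have h : (2 : K) * a.2 a.1 = 0 := by
    linear_combination (prodDualPairing_apply K V a a).symm.trans (hD a ha a ha)
  exact (mul_eq_zero.1 h).resolve_left two_ne_zero

theorem snd_mem_dualAnnihilator (hD : IsIsotropic D) {q : V × Dual K V} (hq : q ∈ D)
    (hq₀ : q.1 = 0) : q.2 ∈ (D.map (fst K V _)).dualAnnihilator := by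
  rw [Submodule.mem_dualAnnihilator]
  rintro _ ⟨p, hp, rfl⟩
  simpa [hq₀] using hD q hq p hp

theorem inf_ker_fst_le (hD : IsIsotropic D) :
    D ⊓ ker (fst K V _) ≤ (D.map (fst K V _)).dualAnnihilator.map (inr K V _) := by
  rintro q ⟨hq, hq₀ : q.1 = 0⟩
  exact ⟨q.2, hD.snd_mem_dualAnnihilator hq hq₀, Prod.ext hq₀.symm rfl⟩

end IsIsotropic

namespace IsMaximalIsotropic

variable [FiniteDimensional K V]

theorem inf_ker_fst_eq (hD : IsMaximalIsotropic D) :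
    D ⊓ ker (fst K V _) = (D.map (fst K V _)).dualAnnihilator.map (inr K V _) := by
  refine Submodule.eq_of_le_of_finrank_eq hD.isIsotropic.inf_ker_fst_le ?_
  have hrank := Submodule.finrank_map_add_finrank_inf_ker (fst K V (Dual K V)) D
  have hann := Subspace.finrank_add_finrank_dualAnnihilator_eq (D.map (fst K V (Dual K V)))
  rw [Submodule.finrank_map_of_injective inr_injective]
  have := hD.finrank_eq
  omega

theorem mk_zero_mem (hD : IsMaximalIsotropic D) {ξ : Dual K V}
    (hξ : ξ ∈ (D.map (fst K V _)).dualAnnihilator) : ((0 : V), ξ) ∈ D :=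
  (hD.inf_ker_fst_eq.ge ⟨ξ, hξ, rfl⟩).1

theorem inf_inf_ker_fst_eq (h₁ : IsMaximalIsotropic D₁) (h₂ : IsMaximalIsotropic D₂) :
    D₁ ⊓ D₂ ⊓ ker (fst K V _) =
      (D₁.map (fst K V _) ⊔ D₂.map (fst K V _)).dualAnnihilator.map (inr K V _) := by
  rw [Submodule.dualAnnihilator_sup_eq, Submodule.map_inf _ inr_injective, ← h₁.inf_ker_fst_eq,
    ← h₂.inf_ker_fst_eq, inf_inf_distrib_right]

theorem fst_mem_map_fst_inf_iff (h₁ : IsMaximalIsotropic D₁) (h₂ : IsMaximalIsotropic D₂)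
    {a b : V × Dual K V} (ha : a ∈ D₁) (hb : b ∈ D₂) (hab : a.1 = b.1) :
    a.1 ∈ (D₁ ⊓ D₂).map (fst K V _) ↔
      b.2 - a.2 ∈ (D₁.map (fst K V _) ⊓ D₂.map (fst K V _)).dualAnnihilator := by
  rw [Subspace.dualAnnihilator_inf_eq]
  constructor
  · rintro ⟨p, ⟨hp₁, hp₂⟩, hpa : p.1 = a.1⟩
    have hα := h₁.isIsotropic.snd_mem_dualAnnihilator (sub_mem hp₁ ha) (by simp [hpa])
    have hβ := h₂.isIsotropic.snd_mem_dualAnnihilator (sub_mem hb hp₂) (by simp [hpa, hab])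
    convert Submodule.add_mem_sup hα hβ using 1
    simp
  · intro h
    obtain ⟨α, hα, β, hβ, hαβ⟩ := Submodule.mem_sup.1 h
    refine ⟨a + ((0 : V), α), ⟨add_mem ha (h₁.mk_zero_mem hα), ?_⟩, by simp⟩
    have hlift : a + ((0 : V), α) = b - ((0 : V), β) :=
      Prod.ext (by simp [hab]) (eq_sub_of_add_eq (by rw [Prod.snd_add, add_assoc, hαβ]; abel))
    exact hlift ▸ sub_mem hb (h₂.mk_zero_mem hβ)

theorem finrank_map_fst_inf_mod_two [NeZero (2 : K)] (h₁ : IsMaximalIsotropic D₁)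
    (h₂ : IsMaximalIsotropic D₂) :
    finrank K ((D₁ ⊓ D₂).map (fst K V _)) % 2 =
      finrank K (D₁.map (fst K V _) ⊓ D₂.map (fst K V _) : Submodule K V) % 2 := by
  set F := D₁.map (fst K V (Dual K V)) ⊓ D₂.map (fst K V (Dual K V))
  obtain ⟨s₁, hs₁⟩ := Submodule.exists_lift_of_le_map (fst K V (Dual K V)) (p := D₁) (q := F)
    inf_le_left
  obtain ⟨s₂, hs₂⟩ := Submodule.exists_lift_of_le_map (fst K V (Dual K V)) (p := D₂) (q := F)
    inf_le_right
  have hfst₁ : ∀ z, (s₁ z).1 = z := fun z => (hs₁ z).2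
  have hfst₂ : ∀ z, (s₂ z).1 = z := fun z => (hs₂ z).2
  set c : LinearMap.BilinForm K F := (prodDualPairing K V).compl₁₂ s₂ s₁
  have hc : ∀ z u, c z u = ((s₂ z).2 - (s₁ z).2) u := by
    intro z u
    have h := h₁.isIsotropic _ (hs₁ z).1 _ (hs₁ u).1
    simp only [prodDualPairing_apply, hfst₁] at h
    simp only [c, compl₁₂_apply, prodDualPairing_apply, hfst₁, hfst₂, LinearMap.sub_apply]
    linear_combination h
  have hAlt : c.IsAlt := fun z => by
    have hz₁ := h₁.isIsotropic.snd_apply_fst (hs₁ z).1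
    have hz₂ := h₂.isIsotropic.snd_apply_fst (hs₂ z).1
    rw [hfst₁] at hz₁
    rw [hfst₂] at hz₂
    rw [hc, LinearMap.sub_apply, hz₁, hz₂, sub_zero]
  have hmem : ∀ z : F, z ∈ ker c ↔ (z : V) ∈ (D₁ ⊓ D₂).map (fst K V _) := by
    intro z
    rw [← hfst₁ z, h₁.fst_mem_map_fst_inf_iff h₂ (hs₁ z).1 (hs₂ z).1
      ((hfst₁ z).trans (hfst₂ z).symm), Submodule.mem_dualAnnihilator, mem_ker]
    constructor
    · intro h w hw
      rw [← hc z ⟨w, hw⟩, h, LinearMap.zero_apply]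
    · intro h
      ext u
      rw [hc, LinearMap.zero_apply]
      exact h u u.2
  have hker : (ker c).map F.subtype = (D₁ ⊓ D₂).map (fst K V _) := by
    ext x
    constructor
    · rintro ⟨z, hz, rfl⟩
      exact (hmem z).1 hz
    · intro hx
      have hxF : x ∈ F := Submodule.map_inf_le _ hx
      exact ⟨⟨x, hxF⟩, (hmem ⟨x, hxF⟩).2 hx, rfl⟩
  rw [← hker, Submodule.finrank_map_subtype_eq, ← c.finrank_range_add_finrank_ker]
  obtain ⟨k, hk⟩ := hAlt.even_finrank_range
  omega

theorem finrank_inf_add_mod_two [NeZero (2 : K)] (h₁ : IsMaximalIsotropic D₁)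
    (h₂ : IsMaximalIsotropic D₂) :
    (finrank K (D₁ ⊓ D₂ : Submodule K (V × Dual K V)) + finrank K (D₁.map (fst K V _)) +
      finrank K (D₂.map (fst K V _))) % 2 = finrank K V % 2 := by
  have hrank := Submodule.finrank_map_add_finrank_inf_ker (fst K V (Dual K V)) (D₁ ⊓ D₂)
  rw [h₁.inf_inf_ker_fst_eq h₂,
    Submodule.finrank_map_of_injective (f := inr K V (Dual K V)) inr_injective] at hrank
  have hann := Subspace.finrank_add_finrank_dualAnnihilator_eq
    (D₁.map (fst K V (Dual K V)) ⊔ D₂.map (fst K V (Dual K V)))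
  have hsup := Submodule.finrank_sup_add_finrank_inf_eq
    (D₁.map (fst K V (Dual K V))) (D₂.map (fst K V (Dual K V)))
  have hpar := h₁.finrank_map_fst_inf_mod_two h₂
  omega

end IsMaximalIsotropic

end DualPairing

section Conjugation

variable {V : Type*} [AddCommGroup V] [Module ℂ V]

def IsProdDualConj (σ : V →ₛₗ[starRingEnd ℂ] V) (σP : V × Dual ℂ V → V × Dual ℂ V) : Prop :=
  ∀ (x : V) (ξ : Dual ℂ V), (σP (x, ξ)).1 = σ x ∧ ∀ v : V, (σP (x, ξ)).2 v = conj (ξ (σ v))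

variable {σ : V →ₛₗ[starRingEnd ℂ] V} {σP : V × Dual ℂ V → V × Dual ℂ V}

namespace IsProdDualConj

theorem exists_semilinearMap_coe_eq (hσP : IsProdDualConj σ σP) :
    ∃ g : (V × Dual ℂ V) →ₛₗ[starRingEnd ℂ] (V × Dual ℂ V), ⇑g = σP := by
  refine ⟨⟨⟨σP, fun p q => Prod.ext ?_ ?_⟩, fun c p => Prod.ext ?_ ?_⟩, rfl⟩
  · simp [(hσP _ _).1]
  · ext v; simp [(hσP _ _).2]
  · simp [(hσP _ _).1]
  · ext v; simp [(hσP _ _).2]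

theorem prodDualPairing_apply (hσP : IsProdDualConj σ σP) (hσ : Function.Involutive σ)
    (a b : V × Dual ℂ V) :
    prodDualPairing ℂ V (σP a) (σP b) = conj (prodDualPairing ℂ V a b) := by
  simp [(hσP _ _).1, (hσP _ _).2, hσ _]

theorem involutive (hσP : IsProdDualConj σ σP) (hσ : Function.Involutive σ) :
    Function.Involutive σP := fun p =>
  Prod.ext (by simp [(hσP _ _).1, hσ _]) (by ext v; simp [(hσP _ _).2, hσ _])

variable {g : (V × Dual ℂ V) →ₛₗ[starRingEnd ℂ] (V × Dual ℂ V)} {D : Submodule ℂ (V × Dual ℂ V)}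

theorem isMaximalIsotropic_map [FiniteDimensional ℂ V] (hσP : IsProdDualConj σ σP)
    (hσ : Function.Involutive σ) (hg : ⇑g = σP) (hD : IsMaximalIsotropic D) :
    IsMaximalIsotropic (D.map g) := by
  refine ⟨?_, ?_⟩
  · rintro _ ⟨a, ha, rfl⟩ _ ⟨b, hb, rfl⟩
    rw [hg, hσP.prodDualPairing_apply hσ, hD.isIsotropic a ha b hb, map_zero]
  · rw [Submodule.finrank_map_of_injective (hg ▸ (hσP.involutive hσ).injective), hD.finrank_eq]

theorem map_fst_map (hσP : IsProdDualConj σ σP) (hg : ⇑g = σP) :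
    (D.map g).map (fst ℂ V _) = (D.map (fst ℂ V _)).map σ := by
  rw [← Submodule.map_comp, ← Submodule.map_comp]
  congr 1
  ext p
  simpa [hg] using (hσP p.1 p.2).1

end IsProdDualConj

end Conjugation

/-- let `V` be a finite-dimensional complex vector space with a
conjugation `σ` coming from a real form, extended componentwise to `V ⊕ V*`,
and let `D ⊆ V ⊕ V*` be maximal isotropic.  Then the real index
`dim_ℂ (D ∩ D̄)` has the same parity as `dim_ℂ V`. -/
theorem stmt19 (V : Type*) [AddCommGroup V] [Module ℂ V] [FiniteDimensional ℂ V]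
    (σ : V → V)
    (hσadd : ∀ x y, σ (x + y) = σ x + σ y)
    (hσsmul : ∀ (c : ℂ) (x : V), σ (c • x) = (starRingEnd ℂ c) • σ x)
    (hσinv : ∀ x, σ (σ x) = x)
    (σP : V × Module.Dual ℂ V → V × Module.Dual ℂ V)
    (hσP : ∀ (x : V) (ξ : Module.Dual ℂ V),
      (σP (x, ξ)).1 = σ x ∧ ∀ v : V, (σP (x, ξ)).2 v = starRingEnd ℂ (ξ (σ v)))
    (D : Submodule ℂ (V × Module.Dual ℂ V))
    (hiso : ∀ a ∈ D, ∀ b ∈ D, pairC a b = 0)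
    (hdim : Module.finrank ℂ D = Module.finrank ℂ V)
    (Dbar : Submodule ℂ (V × Module.Dual ℂ V))
    (hDbar : (Dbar : Set (V × Module.Dual ℂ V)) = σP '' (D : Set (V × Module.Dual ℂ V))) :
    Module.finrank ℂ (D ⊓ Dbar : Submodule ℂ (V × Module.Dual ℂ V)) % 2
      = Module.finrank ℂ V % 2 := by
  let σL : V →ₛₗ[starRingEnd ℂ] V := ⟨⟨σ, hσadd⟩, hσsmul⟩
  have hσP' : IsProdDualConj σL σP := hσP
  obtain ⟨g, hg⟩ := hσP'.exists_semilinearMap_coe_eq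
  obtain rfl : Dbar = D.map g := SetLike.coe_injective (by rw [hDbar, Submodule.map_coe, hg])
  have hD : IsMaximalIsotropic D := ⟨hiso, hdim⟩
  have hpar := hD.finrank_inf_add_mod_two (hσP'.isMaximalIsotropic_map hσinv hg hD)
  rw [hσP'.map_fst_map hg,
    Submodule.finrank_map_of_injective (f := σL) (Function.LeftInverse.injective hσinv)] at hpar
  omega
end
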